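/- arXiv:2209.04910 — 3 statements merged into one kernel-verified Lean document; each statement's English description precedes it below -/
import Mathlib

section
/- Let q ≡ -1 (mod 3) be odd. Then the line ℓ_{1/9} (with coordinate vector (1/9, 0, 1, -1/9, 0, 1)) is an imaginary axis: there exist β_1 = 0, β_2 = 1/3 satisfying the axis equations, and the polynomial x^2 - β_1 x + β_2 = x^2 + 1/3 has no root in F_q. -/
/-- For q odd with q ≡ -1 (mod 3), the line ℓ_{1/9} is an imaginary axis:
β₁ = 0, β₂ = 1/3 satisfy the axis equations (the axis vector equals (1/9,0,1,-1/9,0,1)),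
and x² + 1/3 has no root in F_q. -/
theorem stmt8 (F : Type*) [Field F] [Fintype F]
    (hodd : Odd (Fintype.card F)) (hq : Fintype.card F % 3 = 2) :
    ∃ β₁ β₂ : F, β₁ = 0 ∧ β₂ = (3 : F)⁻¹ ∧
      (![β₂ ^ 2, β₁ * β₂, 3 * β₂, (β₁ ^ 2 - β₂) / 3, -β₁, 1] : Fin 6 → F) =
        ![(9 : F)⁻¹, 0, 1, -(9 : F)⁻¹, 0, 1] ∧
      ¬ ∃ x : F, x ^ 2 - β₁ * x + β₂ = 0 := by
  classical
  have hchar2 : ringChar F ≠ 2 := by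
    intro h
    have := FiniteField.even_card_of_char_two h
    obtain ⟨k, hk⟩ := hodd
    omega
  have h2 : (2 : F) ≠ 0 := Ring.two_ne_zero hchar2
  have h3 : (3 : F) ≠ 0 := by
    intro h
    have hdvd : ringChar F ∣ 3 := by
      rw [← CharP.cast_eq_zero_iff F (ringChar F) 3]
      exact_mod_cast h
    have hp : (ringChar F).Prime := CharP.char_is_prime F (ringChar F)
    have h3' : ringChar F = 3 := ((Nat.prime_dvd_prime_iff_eq hp Nat.prime_three).mp hdvd)
    obtain ⟨n, hn⟩ := FiniteField.card F (ringChar F)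
    rw [h3'] at hn
    have : 3 ∣ Fintype.card F := hn.2 ▸ dvd_pow_self 3 n.ne_zero
    omega
  have e3 : (3 : F) * (3 : F)⁻¹ = 1 := mul_inv_cancel₀ h3
  refine ⟨0, (3 : F)⁻¹, rfl, rfl, ?_, ?_⟩
  · funext i
    fin_cases i
    · show ((3 : F)⁻¹) ^ 2 = (9 : F)⁻¹
      rw [show (9 : F) = 3 ^ 2 by norm_num, ← inv_pow]
    · show (0 : F) * (3 : F)⁻¹ = 0
      ring
    · show (3 : F) * (3 : F)⁻¹ = 1
      exact e3
    · show ((0 : F) ^ 2 - (3 : F)⁻¹) / 3 = -(9 : F)⁻¹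
      rw [show (9 : F) = 3 ^ 2 by norm_num, ← inv_pow]
      field_simp
      ring
    · show -(0 : F) = 0
      ring
    · rfl
  · rintro ⟨x, hx⟩
    have hx2 : x ^ 2 = -(3 : F)⁻¹ := by linear_combination hx
    set ω : F := (-1 + 3 * x) / 2 with hω
    have h4 : ((2 : F) * 2) * (ω ^ 2 + ω + 1) = 9 * x ^ 2 + 3 := by
      rw [hω]; field_simp; ring
    have h5 : 9 * x ^ 2 + 3 = 0 := by
      rw [hx2]; linear_combination (-3 : F) * e3
    have key : ω ^ 2 + ω + 1 = 0 := by
      apply mul_left_cancel₀ (mul_ne_zero h2 h2)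
      rw [mul_zero]; exact h4.trans h5
    have hω0 : ω ≠ 0 := by
      intro h; rw [h] at key; simp at key
    have hω1 : ω ≠ 1 := by
      intro h; rw [h] at key; apply h3; linear_combination key
    have hω3 : ω ^ 3 = 1 := by
      linear_combination (ω - 1) * key
    set u : Fˣ := Units.mk0 ω hω0 with hu
    have hu3 : u ^ 3 = 1 := by
      ext; push_cast [hu]; exact hω3
    have hu1 : u ≠ 1 := by
      intro h
      apply hω1
      have : (u : F) = 1 := by rw [h]; rfl
      simpa [hu] using this
    have hord : orderOf u = 3 := by
      have hdvd : orderOf u ∣ 3 := orderOf_dvd_of_pow_eq_one hu3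
      rcases (Nat.prime_three).eq_one_or_self_of_dvd _ hdvd with h | h
      · exact absurd (orderOf_eq_one_iff.mp h) hu1
      · exact h
    have hdvdcard : orderOf u ∣ Fintype.card Fˣ := orderOf_dvd_card
    rw [hord, Fintype.card_units] at hdvdcard
    have hcard : 2 ≤ Fintype.card F := Fintype.one_lt_card
    obtain ⟨m, hm⟩ := hdvdcard
    omega
end

section
/- Let q be a prime power of characteristic 3 and let M be the 4×4 matrix with rows (a^3, a^2c, ac^2, c^3), (0, a^2d - abc, bc^2 - acd, 0), (0, b^2c - abd, ad^2 - bcd, 0), (b^3, b^2d, bd^2, d^3), where a,b,c,d ∈ F_q and ad - bc ≠ 0. If the row vector (1,0,1,0) is mapped by M to a nonzero scalar multiple of (1,0,1,0), then b = 0, c = 0, and d^2 = a^2 (so d = a or d = -a). -/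
/-- In characteristic 3, if the projectivity matrix fixes the point
(1,0,1,0), then b = 0, c = 0 and d² = a². -/
theorem stmt10 (F : Type*) [Field F] [Fintype F] [CharP F 3]
    (a b c d : F) (hdet : a * d - b * c ≠ 0)
    (M : Matrix (Fin 4) (Fin 4) F)
    (hM : M = !![a ^ 3, a ^ 2 * c, a * c ^ 2, c ^ 3;
                 0, a ^ 2 * d - a * b * c, b * c ^ 2 - a * c * d, 0;
                 0, b ^ 2 * c - a * b * d, a * d ^ 2 - b * c * d, 0;
                 b ^ 3, b ^ 2 * d, b * d ^ 2, d ^ 3])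
    (h : ∃ δ : F, δ ≠ 0 ∧
      Matrix.vecMul (![1, 0, 1, 0] : Fin 4 → F) M = δ • ![1, 0, 1, 0]) :
    b = 0 ∧ c = 0 ∧ d ^ 2 = a ^ 2 ∧ (d = a ∨ d = -a) := by
  obtain ⟨δ, hδ, heq⟩ := h
  subst hM
  have h0 := congrFun heq 0
  have h1 := congrFun heq 1
  have h2 := congrFun heq 2
  have h3 := congrFun heq 3
  simp [Matrix.vecMul, dotProduct, Fin.sum_univ_four, Matrix.cons_val_zero,
    Matrix.cons_val_one, Matrix.head_cons] at h0 h1 h2 h3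
  -- h3 : c^3 = 0
  have hc : c = 0 := h3
  subst hc
  have ha : a ≠ 0 := by
    intro ha
    apply hδ
    rw [← h0]
    simp [ha]
  have hd : d ≠ 0 := by
    intro hd
    apply hdet
    simp [hd]
  have hb : b = 0 := by
    have h1' : a * b * d = 0 := by linear_combination -h1
    rcases mul_eq_zero.mp h1' with h | h
    · rcases mul_eq_zero.mp h with h | h
      · exact absurd h ha
      · exact h
    · exact absurd h hd
  subst hb
  have hd2 : d ^ 2 = a ^ 2 := by
    have : a * d ^ 2 = a ^ 3 := by linear_combination h2 - h0
    have := mul_left_cancel₀ ha (by linear_combination this : a * d ^ 2 = a * a ^ 2)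
    exact this
  refine ⟨rfl, rfl, hd2, ?_⟩
  have : (d - a) * (d + a) = 0 := by ring_nf; linear_combination hd2
  rcases mul_eq_zero.mp this with h | h
  · left; linear_combination h
  · right; linear_combination h
end

section
/- Let q be an odd prime power with q ≡ -1 (mod 12), and let s ∈ F_q with s^2 = 3. Then exactly one of the two elements (-3 - 2s)/3 and (-3 + 2s)/3 is a nonzero square in F_q. Consequently, the equation 3b^4 + 6b^2 - 1 = 0 has exactly two solutions b in F_q. -/
lemma stmt17_count (F : Type*) [Field F] [Fintype F] [DecidableEq F]
    (h2 : (2:F) ≠ 0) (h3 : (3:F) ≠ 0)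
    (u v x : F) (hx : x ≠ 0) (hu : x ^ 2 = u) (hv : ¬ IsSquare v)
    (hfac : ∀ b : F, 3 * b ^ 4 + 6 * b ^ 2 - 1 = 3 * (b ^ 2 - u) * (b ^ 2 - v)) :
    (Finset.univ.filter (fun b : F => 3 * b ^ 4 + 6 * b ^ 2 - 1 = 0)).card = 2 := by
  have hset : (Finset.univ.filter (fun b : F => 3 * b ^ 4 + 6 * b ^ 2 - 1 = 0))
      = {x, -x} := by
    ext b
    simp only [Finset.mem_filter, Finset.mem_univ, true_and, Finset.mem_insert,
      Finset.mem_singleton, hfac b]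
    constructor
    · intro h
      rcases mul_eq_zero.mp h with h | h
      · rcases mul_eq_zero.mp h with h | h
        · exact absurd h h3
        · have hb : b ^ 2 = x ^ 2 := by rw [hu]; linear_combination h
          exact sq_eq_sq_iff_eq_or_eq_neg.mp hb
      · have hv' : v = b * b := by linear_combination -h
        exact absurd ⟨b, hv'⟩ hv
    · intro h
      rcases h with h | h <;> subst h <;>
        · rw [← hu]; ring
  rw [hset, Finset.card_insert_of_notMem, Finset.card_singleton]
  simp only [Finset.mem_singleton]
  intro h
  apply hx
  have h2x : (2:F) * x = 0 := by linear_combination h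
  rcases mul_eq_zero.mp h2x with h' | h'
  · exact absurd h' h2
  · exact h'

/-- For q odd with q ≡ -1 (mod 12) and s a square root of 3 in F_q,
exactly one of (-3 - 2s)/3 and (-3 + 2s)/3 is a nonzero square; consequently
3b⁴ + 6b² - 1 = 0 has exactly two solutions in F_q. -/
theorem stmt17 (F : Type*) [Field F] [Fintype F] [DecidableEq F]
    (hodd : Odd (Fintype.card F)) (hq : Fintype.card F % 12 = 11)
    (s : F) (hs : s ^ 2 = 3) :
    Xor' (∃ x : F, x ≠ 0 ∧ x ^ 2 = (-3 - 2 * s) / 3)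
         (∃ x : F, x ≠ 0 ∧ x ^ 2 = (-3 + 2 * s) / 3) ∧
    (Finset.univ.filter (fun b : F => 3 * b ^ 4 + 6 * b ^ 2 - 1 = 0)).card = 2 := by
  obtain ⟨n, hp, hcard⟩ := FiniteField.card F (ringChar F)
  -- characteristic ≠ 2
  have hchar2 : ringChar F ≠ 2 := by
    intro h
    have h2 := FiniteField.even_card_iff_char_two.mp h
    obtain ⟨k, hk⟩ := hodd
    omega
  have h2 : (2:F) ≠ 0 := Ring.two_ne_zero hchar2
  -- characteristic ≠ 3
  have h3 : (3:F) ≠ 0 := by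
    intro h
    have hdvd : ringChar F ∣ 3 := (CharP.cast_eq_zero_iff F (ringChar F) 3).mp h
    have h33 : ringChar F = 3 := (Nat.prime_dvd_prime_iff_eq hp Nat.prime_three).mp hdvd
    have : (3:ℕ) ∣ Fintype.card F := by
      rw [hcard, h33]; exact dvd_pow_self _ n.ne_zero
    omega
  have hs0 : s ≠ 0 := by
    intro h
    apply h3
    rw [← hs, h]; ring
  set u : F := (-3 - 2 * s) / 3 with hu_def
  set v : F := (-3 + 2 * s) / 3 with hv_def
  have hsinv : (s⁻¹) ^ 2 = (3:F)⁻¹ := by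
    rw [inv_pow, hs]
  have huv3 : u * v = -1 / 3 := by
    rw [hu_def, hv_def, div_mul_div_comm, div_eq_div_iff (mul_ne_zero h3 h3) h3]
    linear_combination -12 * hs
  have huv : u * v = -1 * (s⁻¹) ^ 2 := by
    rw [huv3, hsinv]; ring
  have hsum : u + v = -2 := by
    rw [hu_def, hv_def, ← add_div, div_eq_iff h3]; ring
  have hprod : 3 * (u * v) = -1 := by
    rw [huv3]; field_simp
  have hm1 : ¬ IsSquare (-1 : F) := by
    rw [FiniteField.isSquare_neg_one_iff]
    omega
  -- quadratic character computation
  have hquv : quadraticChar F u * quadraticChar F v = -1 := by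
    rw [← map_mul, huv, map_mul, quadraticChar_sq_one' (inv_ne_zero hs0),
      quadraticChar_neg_one_iff_not_isSquare.mpr hm1]
    ring
  have hune : u ≠ 0 := by
    intro h
    rw [h, zero_mul] at huv
    exact (neg_ne_zero.mpr (pow_ne_zero 2 (inv_ne_zero hs0)))
      (by linear_combination -huv)
  have hvne : v ≠ 0 := by
    intro h
    rw [h, mul_zero] at huv
    exact (neg_ne_zero.mpr (pow_ne_zero 2 (inv_ne_zero hs0)))
      (by linear_combination -huv)
  -- exactly one of u, v is a square
  have hxor : Xor' (IsSquare u) (IsSquare v) := by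
    rcases quadraticChar_dichotomy hune with h1 | h1 <;>
      rcases quadraticChar_dichotomy hvne with h2' | h2'
    · rw [h1, h2'] at hquv; norm_num at hquv
    · exact Or.inl ⟨(quadraticChar_one_iff_isSquare hune).mp h1,
        fun hsq => by
          rw [(quadraticChar_one_iff_isSquare hvne).mpr hsq] at h2'; norm_num at h2'⟩
    · exact Or.inr ⟨(quadraticChar_one_iff_isSquare hvne).mp h2',
        fun hsq => by
          rw [(quadraticChar_one_iff_isSquare hune).mpr hsq] at h1; norm_num at h1⟩
    · rw [h1, h2'] at hquv; norm_num at hquv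
  have hiff : ∀ w : F, w ≠ 0 → (IsSquare w ↔ ∃ x : F, x ≠ 0 ∧ x ^ 2 = w) := by
    intro w hw
    constructor
    · rintro ⟨r, rfl⟩
      refine ⟨r, fun h => hw (by rw [h]; ring), by ring⟩
    · rintro ⟨x, -, rfl⟩
      exact ⟨x, (sq x)⟩
  have hfac : ∀ b : F, 3 * b ^ 4 + 6 * b ^ 2 - 1 = 3 * (b ^ 2 - u) * (b ^ 2 - v) := by
    intro b
    linear_combination (3 * b ^ 2) * hsum - hprod
  constructor
  · rcases hxor with ⟨h1, h2'⟩ | ⟨h1, h2'⟩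
    · exact Or.inl ⟨(hiff u hune).mp h1, fun h => h2' ((hiff v hvne).mpr h)⟩
    · exact Or.inr ⟨(hiff v hvne).mp h1, fun h => h2' ((hiff u hune).mpr h)⟩
  · rcases hxor with ⟨h1, h2'⟩ | ⟨h1, h2'⟩
    · obtain ⟨x, hx, hx2⟩ := (hiff u hune).mp h1
      exact stmt17_count F h2 h3 u v x hx hx2 h2' hfac
    · obtain ⟨x, hx, hx2⟩ := (hiff v hvne).mp h1
      exact stmt17_count F h2 h3 v u x hx hx2 h2'
        (fun b => by rw [hfac b]; ring)
end
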